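/- arXiv:1903.07921 — 2 statements merged into one kernel-verified Lean document; each statement's English description precedes it below -/
import Mathlib

section
/- Let R and S be rings, M a Frobenius S-R-bimodule, and N = Hom_S(M,S) the associated R-S-bimodule. Then for every i ≥ 0, every left R-module X and every left S-module Y there are isomorphisms of abelian groups Ext^i_S(M ⊗_R X, Y) ≅ Ext^i_R(X, N ⊗_S Y) and Ext^i_R(N ⊗_S Y, X) ≅ Ext^i_S(Y, M ⊗_R X). -/
/-!
Statement 4: Let `M` be a Frobenius `S`-`R`-bimodule with `N = Hom_S(M, S)`.  Then for all
`i ≥ 0`, all left `R`-modules `X` and all left `S`-modules `Y` there are isomorphisms of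
abelian groups `Ext^i_S(M ⊗_R X, Y) ≅ Ext^i_R(X, N ⊗_S Y)` and
`Ext^i_R(N ⊗_S Y, X) ≅ Ext^i_S(Y, M ⊗_R X)`.
-/

universe u
open MulOpposite CategoryTheory
section FrobeniusBimodule

variable (S R M : Type u) [Ring S] [Ring R] [AddCommGroup M]
  [Module S M] [Module Rᵐᵒᵖ M] [SMulCommClass S Rᵐᵒᵖ M] [SMulCommClass Rᵐᵒᵖ S M]

/-- The right action of `r : R` on the `S`-`R`-bimodule `M`, as an `S`-linear map. -/
def ract (r : R) : M →ₗ[S] M where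
  toFun m := op r • m
  map_add' _ _ := smul_add _ _ _
  map_smul' s m := smul_comm (op r) s m

/-- The left action of `s : S` on the `S`-`R`-bimodule `M`, as a right `R`-linear map. -/
def lact (s : S) : M →ₗ[Rᵐᵒᵖ] M where
  toFun m := s • m
  map_add' _ _ := smul_add _ _ _
  map_smul' r m := smul_comm s r m

/-- Left multiplication by `r : R` on `R`, as a right `R`-linear map. -/
def mulLeft' (r : R) : R →ₗ[Rᵐᵒᵖ] R where
  toFun x := r * x
  map_add' := mul_add r
  map_smul' a x := by
    simp only [MulOpposite.smul_eq_mul_unop, RingHom.id_apply, mul_assoc]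

/-- An `S`-`R`-bimodule `M` is a Frobenius bimodule if it is finitely generated projective
as a left `S`-module and as a right `R`-module, and `Hom_S(M, S) ≅ Hom_{Rᵒᵖ}(M, R)` as
`R`-`S`-bimodules.  Here `Hom_S(M, S)` is an `R`-`S`-bimodule via `(r • f • s) m = f (m r) s`,
and `Hom_{Rᵒᵖ}(M, R)` is an `R`-`S`-bimodule via `(r • g • s) m = r * g (s • m)`; the
bimodule conditions on the additive isomorphism `e` are stated via the two compatibilities
below. -/
def IsFrobeniusBimodule : Prop :=
  Module.Finite S M ∧ Module.Projective S M ∧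
  Module.Finite Rᵐᵒᵖ M ∧ Module.Projective Rᵐᵒᵖ M ∧
  ∃ e : (M →ₗ[S] S) ≃+ (M →ₗ[Rᵐᵒᵖ] R),
    (∀ (r : R) (f : M →ₗ[S] S), e (f ∘ₗ ract S R M r) = mulLeft' R r ∘ₗ e f) ∧
    (∀ (s : S) (f : M →ₗ[S] S),
      e (LinearMap.toSpanSingleton S S s ∘ₗ f) = e f ∘ₗ lact S R M s)

variable (Y : Type u) [AddCommGroup Y] [Module S Y]

/-- `Hom_S(M, Y)` is a left `R`-module via the right action of `R` on `M`:
`(r • f) m = f (m r)`. -/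
instance homLeftModule : Module R (M →ₗ[S] Y) where
  smul r f := f ∘ₗ ract S R M r
  one_smul f := by ext m; show f _ = f m; simp [ract]
  mul_smul r r' f := by ext m; show f _ = f _; simp [ract, op_mul, mul_smul]
  smul_zero r := rfl
  smul_add r f g := rfl
  add_smul r r' f := by ext m; show f _ = f _ + f _; simp [ract, op_add, add_smul, map_add]
  zero_smul f := by ext m; show f _ = 0; simp [ract]

/-- The left `R`-action on `Hom_S(M, Y)` through the domain commutes with any compatible
action on the codomain. -/
instance homActionsComm (T : Type u) [Ring T] [Module T Y] [SMulCommClass S T Y] :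
    SMulCommClass T R (M →ₗ[S] Y) :=
  ⟨fun _ _ _ => rfl⟩

end FrobeniusBimodule
section NCTensor

variable (R : Type u) [Ring R] (M : Type u) [AddCommGroup M] [Module Rᵐᵒᵖ M]
  (X : Type u) [AddCommGroup X] [Module R X]
  (S : Type u) [Ring S] [Module S M] [SMulCommClass Rᵐᵒᵖ S M]

/-- The submodule of balanced relations in `M ⊗[ℤ] X`, where `M` is an `S`-`R`-bimodule
and `X` a left `R`-module.  Since the generating set is stable under the action of `S`,
its `S`-span coincides with its additive span. -/
def balS : Submodule S (TensorProduct ℤ M X) :=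
  Submodule.span S
    {z | ∃ (m : M) (r : R) (x : X), z = m ⊗ₜ[ℤ] (r • x) - ((op r) • m) ⊗ₜ[ℤ] x}

/-- The tensor product `M ⊗_R X` over the (possibly noncommutative) ring `R`, for a right
`R`-module `M` and a left `R`-module `X`: the quotient of `M ⊗[ℤ] X` by the balanced
relations.  When `M` is an `S`-`R`-bimodule this is a left `S`-module. -/
def NCT := (TensorProduct ℤ M X) ⧸ balS R M X S

noncomputable instance : AddCommGroup (NCT R M X S) :=
  inferInstanceAs (AddCommGroup ((TensorProduct ℤ M X) ⧸ balS R M X S))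

noncomputable instance : Module S (NCT R M X S) :=
  inferInstanceAs (Module S ((TensorProduct ℤ M X) ⧸ balS R M X S))

/-- The class of the pure tensor `m ⊗ x` in `M ⊗_R X`. -/
noncomputable def mkT (m : M) (x : X) : NCT R M X S :=
  Submodule.Quotient.mk (m ⊗ₜ[ℤ] x)

end NCTensor

/-!
Write `F = M ⊗_R -` and `G = N ⊗_S -`. Since `M` is finitely generated projective over `S`, a
dual basis shows `N ⊗_S Y ≅ Hom_S(M, Y)` naturally, so `F ⊣ G` by tensor-hom adjunction. Since
`M` is finitely generated projective over `Rᵒᵖ`, a dual basis shows `M ⊗_R X ≅ Hom_R(M^∨, X)`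
with `M^∨ = Hom_{Rᵒᵖ}(M, R)`, and the Frobenius isomorphism `N ≅ M^∨` turns this into
`M ⊗_R X ≅ Hom_R(N, X)`, so `G ⊣ F` as well. Being adjoint on both sides, `F` and `G` are exact,
hence induce functors between derived categories that are again adjoint, and
`Ext^i(F X, Y) = Hom(F X, Y[i]) ≅ Hom(X, (G Y)[i]) = Ext^i(X, G Y)`; the other isomorphism
comes from `G ⊣ F` in the same way.
-/

universe w v₁ v₂ u₁ u₂

theorem Module.Finite.exists_dual_basis (A P : Type*) [Semiring A] [AddCommMonoid P] [Module A P]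
    [Module.Finite A P] [Module.Projective A P] :
    ∃ (n : ℕ) (x : Fin n → P) (φ : Fin n → P →ₗ[A] A), ∀ p, ∑ j, φ j p • x j = p := by
  obtain ⟨n, f, g, -, -, hfg⟩ := Module.Finite.exists_comp_eq_id_of_projective A P
  refine ⟨n, fun j => f (Pi.single j 1), fun j => LinearMap.proj j ∘ₗ g, fun p => ?_⟩
  calc ∑ j, g p j • f (Pi.single j 1) = f (∑ j, g p j • Pi.single j 1) := by simp [map_sum]
    _ = f (g p) := by congr 1; ext; simp [Pi.single_apply]
    _ = p := LinearMap.congr_fun hfg p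

open Limits DerivedCategory

namespace CategoryTheory.Adjunction

variable {C : Type u₁} {D : Type u₂} [Category.{v₁} C] [Category.{v₂} D] {F : C ⥤ D} {G : D ⥤ C}

def mapHomologicalComplex [HasZeroMorphisms C] [HasZeroMorphisms D] [F.PreservesZeroMorphisms]
    [G.PreservesZeroMorphisms] (adj : F ⊣ G) {ι : Type*} (c : ComplexShape ι) :
    F.mapHomologicalComplex c ⊣ G.mapHomologicalComplex c where
  unit.app K :=
    { f i := adj.unit.app (K.X i)
      comm' i j _ := (adj.unit.naturality (K.d i j)).symm }
  unit.naturality _ _ f := by ext i; exact adj.unit.naturality (f.f i)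
  counit.app L :=
    { f i := adj.counit.app (L.X i)
      comm' i j _ := (adj.counit.naturality (L.d i j)).symm }
  counit.naturality _ _ g := by ext i; exact adj.counit.naturality (g.f i)
  left_triangle_components K := by ext i; exact adj.left_triangle_components (K.X i)
  right_triangle_components L := by ext i; exact adj.right_triangle_components (L.X i)

variable [Abelian C] [Abelian D] [F.Additive] [G.Additive]
  [PreservesFiniteLimits F] [PreservesFiniteColimits F]
  [PreservesFiniteLimits G] [PreservesFiniteColimits G]

noncomputable def mapDerivedCategory [HasDerivedCategory C] [HasDerivedCategory D]
    (adj : F ⊣ G) : F.mapDerivedCategory ⊣ G.mapDerivedCategory :=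
  letI : CatCommSq (F.mapHomologicalComplex _) Q Q F.mapDerivedCategory :=
    ⟨F.mapDerivedCategoryFactors.symm⟩
  letI : CatCommSq (G.mapHomologicalComplex _) Q Q G.mapDerivedCategory :=
    ⟨G.mapDerivedCategoryFactors.symm⟩
  (adj.mapHomologicalComplex _).localization Q (HomologicalComplex.quasiIso C _) Q
    (HomologicalComplex.quasiIso D _) _ _

noncomputable def extAddEquiv [HasExt.{w} C] [HasExt.{w} D] (adj : F ⊣ G) (X : C) (Y : D)
    (n : ℕ) : Abelian.Ext.{w} (F.obj X) Y n ≃+ Abelian.Ext.{w} X (G.obj Y) n :=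
  letI := HasDerivedCategory.standard C
  letI := HasDerivedCategory.standard D
  let α := (F.mapDerivedCategorySingleFunctor 0).app X
  let β := (G.mapDerivedCategory.commShiftIso (n : ℤ)).app ((singleFunctor D 0).obj Y) ≪≫
    (shiftFunctor _ (n : ℤ)).mapIso ((G.mapDerivedCategorySingleFunctor 0).app Y)
  Abelian.Ext.homAddEquiv.trans <|
    (Linear.homCongr ℤ α.symm (Iso.refl _)).toAddEquiv.trans <|
    (adj.mapDerivedCategory.homAddEquiv _ _).trans <|
    (Linear.homCongr ℤ (Iso.refl _) β).toAddEquiv.trans Abelian.Ext.homAddEquiv.symm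

end CategoryTheory.Adjunction

namespace NCT

variable {R S M X P : Type u} [Ring R] [Ring S] [AddCommGroup M] [Module Rᵐᵒᵖ M] [Module S M]
  [AddCommGroup X] [Module R X] [AddCommGroup P] [Module S P]

lemma mkT_add_left (m m' : M) (x : X) :
    mkT R M X S (m + m') x = mkT R M X S m x + mkT R M X S m' x := by
  rw [mkT, TensorProduct.add_tmul]; rfl

lemma mkT_add_right (m : M) (x x' : X) :
    mkT R M X S m (x + x') = mkT R M X S m x + mkT R M X S m x' := by
  rw [mkT, TensorProduct.tmul_add]; rfl

lemma mkT_zero_right (m : M) : mkT R M X S m 0 = 0 := by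
  rw [mkT, TensorProduct.tmul_zero]; rfl

lemma mkT_smul_left (s : S) (m : M) (x : X) :
    mkT R M X S (s • m) x = s • mkT R M X S m x := by
  rw [mkT, ← TensorProduct.smul_tmul']; rfl

lemma mkT_smul_right (m : M) (r : R) (x : X) :
    mkT R M X S m (r • x) = mkT R M X S (op r • m) x :=
  (Submodule.Quotient.eq _).2 (Submodule.subset_span ⟨m, r, x, rfl⟩)

lemma mkT_sum_left {ι : Type*} (t : Finset ι) (m : ι → M) (x : X) :
    mkT R M X S (∑ j ∈ t, m j) x = ∑ j ∈ t, mkT R M X S (m j) x := by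
  simp only [mkT, TensorProduct.sum_tmul, ← Submodule.mkQ_apply, map_sum]
  rfl

@[elab_as_elim]
lemma induction_on {motive : NCT R M X S → Prop} (z : NCT R M X S) (zero : motive 0)
    (mkT : ∀ m x, motive (mkT R M X S m x)) (add : ∀ a b, motive a → motive b → motive (a + b)) :
    motive z := by
  obtain ⟨t, rfl⟩ := Submodule.Quotient.mk_surjective _ z
  induction t using TensorProduct.induction_on with
  | zero => exact zero
  | tmul m x => exact mkT m x
  | add a b ha hb => exact add _ _ ha hb

noncomputable def lift (b : M →+ X →+ P) (hS : ∀ (s : S) m x, b (s • m) x = s • b m x)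
    (hR : ∀ m (r : R) x, b m (r • x) = b (op r • m) x) : NCT R M X S →ₗ[S] P :=
  (balS R M X S).liftQ
    { TensorProduct.liftAddHom (R := ℤ) b fun n m x => by simp with
      map_smul' := fun s t => by
        induction t using TensorProduct.induction_on with
        | zero => simp
        | tmul m x => exact hS s m x
        | add a c ha hc => simp_all [smul_add] }
    (Submodule.span_le.2 fun _ ⟨m, r, x, hz⟩ => by simp [hz, hR])

lemma hom_ext {f g : NCT R M X S →ₗ[S] P} (h : ∀ m x, f (mkT R M X S m x) = g (mkT R M X S m x)) :
    f = g := by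
  ext z
  induction z using induction_on with
  | zero => simp
  | mkT m x => exact h m x
  | add a b ha hb => rw [map_add, map_add, ha, hb]

noncomputable def mkTAddHom : M →+ X →+ NCT R M X S :=
  AddMonoidHom.mk' (fun m => AddMonoidHom.mk' (mkT R M X S m) (mkT_add_right m))
    fun m m' => AddMonoidHom.ext fun x => mkT_add_left m m' x

variable {X' : Type u} [AddCommGroup X'] [Module R X']

noncomputable def map (f : X →ₗ[R] X') : NCT R M X S →ₗ[S] NCT R M X' S :=
  lift (mkTAddHom.compl₂ f.toAddMonoidHom)
    (fun s m x => mkT_smul_left s m (f x))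
    (fun m r x => by simp [mkTAddHom, mkT_smul_right])

@[simp]
lemma map_mkT (f : X →ₗ[R] X') (m : M) (x : X) :
    map (S := S) f (mkT R M X S m x) = mkT R M X' S m (f x) := rfl

end NCT

section TensorHom

variable {S R P : Type u} [Ring S] [Ring R] [AddCommGroup P] [Module S P] [Module Rᵐᵒᵖ P]
  [SMulCommClass Rᵐᵒᵖ S P] {X Y : Type u} [AddCommGroup X] [Module R X] [AddCommGroup Y]
  [Module S Y]

noncomputable def NCT.curryEquiv : (NCT R P X S →ₗ[S] Y) ≃ (X →ₗ[R] P →ₗ[S] Y) where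
  toFun g :=
    { toFun x :=
        { toFun m := g (mkT R P X S m x)
          map_add' m m' := by rw [NCT.mkT_add_left, map_add]
          map_smul' s m := by rw [NCT.mkT_smul_left, map_smul]; rfl }
      map_add' x x' := LinearMap.ext fun m => by
        simp only [NCT.mkT_add_right, map_add, LinearMap.coe_mk, AddHom.coe_mk,
          LinearMap.add_apply]
      map_smul' r x := LinearMap.ext fun m => congrArg g (NCT.mkT_smul_right m r x) }
  invFun h :=
    NCT.lift (LinearMap.toAddMonoidHom'.comp h.toAddMonoidHom).flip
      (fun s m x => (h x).map_smul s m)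
      (fun m r x => LinearMap.congr_fun (h.map_smul r x) m)
  left_inv g := NCT.hom_ext fun _ _ => rfl
  right_inv h := rfl

end TensorHom

section Functors

variable (S R P : Type u) [Ring S] [Ring R] [AddCommGroup P] [Module S P] [Module Rᵐᵒᵖ P]

noncomputable def tensorFunctor : ModuleCat.{u} R ⥤ ModuleCat.{u} S where
  obj X := ModuleCat.of S (NCT R P X S)
  map f := ModuleCat.ofHom (NCT.map f.hom)
  map_id _ := ModuleCat.hom_ext (NCT.hom_ext fun _ _ => rfl)
  map_comp _ _ := ModuleCat.hom_ext (NCT.hom_ext fun _ _ => rfl)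

instance : (tensorFunctor S R P).Additive where
  map_add := ModuleCat.hom_ext (NCT.hom_ext fun _ _ => NCT.mkT_add_right _ _ _)

variable [SMulCommClass Rᵐᵒᵖ S P]

noncomputable def homFunctor : ModuleCat.{u} S ⥤ ModuleCat.{u} R where
  obj Y := ModuleCat.of R (P →ₗ[S] Y)
  map g := ModuleCat.ofHom
    { toFun := g.hom.comp
      map_add' f f' := LinearMap.comp_add f f' g.hom
      map_smul' _ _ := rfl }

noncomputable def tensorHomAdjunction : tensorFunctor S R P ⊣ homFunctor S R P :=
  Adjunction.mkOfHomEquiv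
    { homEquiv X Y := ModuleCat.homEquiv.trans <| NCT.curryEquiv.trans
        (ModuleCat.homEquiv (M := X) (N := (homFunctor S R P).obj Y)).symm
      homEquiv_naturality_left_symm _ _ := ModuleCat.hom_ext (NCT.hom_ext fun _ _ => rfl)
      homEquiv_naturality_right _ _ := rfl }

end Functors

section DualTensor

variable (S R P : Type u) [Ring S] [Ring R] [AddCommGroup P] [Module S P] [Module Rᵐᵒᵖ P]
  [SMulCommClass Rᵐᵒᵖ S P] (Y : Type u) [AddCommGroup Y] [Module S Y]

noncomputable def dualTensorToHom : NCT S (P →ₗ[S] S) Y R →ₗ[R] (P →ₗ[S] Y) :=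
  NCT.lift
    (AddMonoidHom.mk' (fun f => AddMonoidHom.mk' f.smulRight fun y y' => by ext; simp [smul_add])
      fun f f' => by ext; simp [add_smul])
    (fun _ _ _ => rfl)
    (fun f s y => LinearMap.ext fun p => by simp [mul_smul])

@[simp]
lemma dualTensorToHom_mkT (f : P →ₗ[S] S) (y : Y) (p : P) :
    dualTensorToHom S R P Y (mkT S (P →ₗ[S] S) Y R f y) p = f p • y := rfl

variable {Y} in
lemma dualTensorToHom_naturality {Y' : Type u} [AddCommGroup Y'] [Module S Y'] (g : Y →ₗ[S] Y')
    (z : NCT S (P →ₗ[S] S) Y R) :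
    dualTensorToHom S R P Y' (NCT.map g z) = g ∘ₗ dualTensorToHom S R P Y z := by
  induction z using NCT.induction_on with
  | zero => simp
  | mkT f y => ext; simp
  | add a b ha hb => simp only [map_add, ha, hb, LinearMap.comp_add]

lemma dualTensorToHom_bijective [Module.Finite S P] [Module.Projective S P] :
    Function.Bijective (dualTensorToHom S R P Y) := by
  obtain ⟨n, x, φ, hx⟩ := Module.Finite.exists_dual_basis S P
  let inv (g : P →ₗ[S] Y) : NCT S (P →ₗ[S] S) Y R := ∑ j, mkT S _ Y R (φ j) (g (x j))
  refine Function.bijective_iff_has_inverse.2 ⟨inv, fun z => ?_, fun g => ?_⟩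
  · induction z using NCT.induction_on with
    | zero => simp [inv, NCT.mkT_zero_right]
    | mkT f y =>
      have hf : ∑ j, op (f (x j)) • φ j = f := LinearMap.ext fun p => by
        conv_rhs => rw [← hx p]
        simp [map_sum]
      calc inv (dualTensorToHom S R P Y (mkT S _ Y R f y))
          = ∑ j, mkT S _ Y R (op (f (x j)) • φ j) y := by simp [inv, NCT.mkT_smul_right]
        _ = mkT S _ Y R f y := by rw [← NCT.mkT_sum_left, hf]
    | add a b ha hb =>
      simp only [inv, map_add, LinearMap.add_apply, NCT.mkT_add_right,
        Finset.sum_add_distrib] at ha hb ⊢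
      rw [ha, hb]
  · ext p
    conv_rhs => rw [← hx p]
    simp [inv, map_sum]

noncomputable def dualTensorIsoHomFunctor [Module.Finite S P] [Module.Projective S P] :
    tensorFunctor R S (P →ₗ[S] S) ≅ homFunctor S R P :=
  NatIso.ofComponents
    (fun Y => (LinearEquiv.ofBijective _ (dualTensorToHom_bijective S R P Y)).toModuleIso)
    fun g => ModuleCat.hom_ext (LinearMap.ext (dualTensorToHom_naturality S R P g.hom))

noncomputable def tensorDualAdjunction [Module.Finite S P] [Module.Projective S P] :
    tensorFunctor S R P ⊣ tensorFunctor R S (P →ₗ[S] S) :=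
  (tensorHomAdjunction S R P).ofNatIsoRight (dualTensorIsoHomFunctor S R P).symm

end DualTensor

section Frobenius

variable {S R M : Type u} [Ring S] [Ring R] [AddCommGroup M] [Module S M] [Module Rᵐᵒᵖ M]
  (e : (M →ₗ[S] S) ≃+ (M →ₗ[Rᵐᵒᵖ] R))

lemma map_smul_apply_of_comp_ract [SMulCommClass Rᵐᵒᵖ S M]
    (he1 : ∀ (r : R) (f : M →ₗ[S] S), e (f ∘ₗ ract S R M r) = mulLeft' R r ∘ₗ e f)
    (r : R) (f : M →ₗ[S] S) (m : M) : e (r • f) m = r * e f m :=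
  LinearMap.congr_fun (he1 r f) m

lemma map_op_smul_apply_of_comp_lact [SMulCommClass S Rᵐᵒᵖ M]
    (he2 : ∀ (s : S) (f : M →ₗ[S] S),
      e (LinearMap.toSpanSingleton S S s ∘ₗ f) = e f ∘ₗ lact S R M s)
    (s : S) (f : M →ₗ[S] S) (m : M) : e (op s • f) m = e f (s • m) :=
  LinearMap.congr_fun (he2 s f) m

variable [SMulCommClass S Rᵐᵒᵖ M] [SMulCommClass Rᵐᵒᵖ S M]
  (he1 : ∀ (r : R) (f : M →ₗ[S] S), e (f ∘ₗ ract S R M r) = mulLeft' R r ∘ₗ e f)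
  (he2 : ∀ (s : S) (f : M →ₗ[S] S),
    e (LinearMap.toSpanSingleton S S s ∘ₗ f) = e f ∘ₗ lact S R M s)
  (X : Type u) [AddCommGroup X] [Module R X]

def frobeniusEval (m : M) : (M →ₗ[S] S) →ₗ[R] R where
  toFun f := e f m
  map_add' f f' := by simp
  map_smul' r f := map_smul_apply_of_comp_ract e he1 r f m

noncomputable def frobeniusTensorToHom : NCT R M X S →ₗ[S] ((M →ₗ[S] S) →ₗ[R] X) :=
  NCT.lift
    (AddMonoidHom.mk' (fun m => AddMonoidHom.mk' (frobeniusEval e he1 m).smulRight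
        fun x x' => by ext; simp [smul_add])
      fun m m' => by ext; simp [frobeniusEval, add_smul])
    (fun s m x => LinearMap.ext fun f =>
      congrArg (· • x) (map_op_smul_apply_of_comp_lact e he2 s f m).symm)
    (fun m r x => LinearMap.ext fun f => by
      simp [frobeniusEval, MulOpposite.smul_eq_mul_unop, mul_smul])

@[simp]
lemma frobeniusTensorToHom_mkT (m : M) (x : X) (f : M →ₗ[S] S) :
    frobeniusTensorToHom e he1 he2 X (mkT R M X S m x) f = e f m • x := rfl

variable {X} in
lemma frobeniusTensorToHom_naturality {X' : Type u} [AddCommGroup X'] [Module R X']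
    (g : X →ₗ[R] X') (z : NCT R M X S) :
    frobeniusTensorToHom e he1 he2 X' (NCT.map g z) = g ∘ₗ frobeniusTensorToHom e he1 he2 X z := by
  induction z using NCT.induction_on with
  | zero => simp
  | mkT m x => ext; simp
  | add a b ha hb => simp only [map_add, ha, hb, LinearMap.comp_add]

lemma frobeniusTensorToHom_bijective [Module.Finite Rᵐᵒᵖ M] [Module.Projective Rᵐᵒᵖ M] :
    Function.Bijective (frobeniusTensorToHom e he1 he2 X) := by
  obtain ⟨n, x, γ, hx⟩ := Module.Finite.exists_dual_basis Rᵐᵒᵖ M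
  let ψ (j : Fin n) : M →ₗ[S] S := e.symm ((opLinearEquiv Rᵐᵒᵖ).symm.toLinearMap ∘ₗ γ j)
  have hψ (j : Fin n) (m : M) : e (ψ j) m = unop (γ j m) := by simp [ψ]
  let inv (g : (M →ₗ[S] S) →ₗ[R] X) : NCT R M X S := ∑ j, mkT R M X S (x j) (g (ψ j))
  refine Function.bijective_iff_has_inverse.2 ⟨inv, fun z => ?_, fun g => ?_⟩
  · induction z using NCT.induction_on with
    | zero => simp [inv, NCT.mkT_zero_right]
    | mkT m y =>
      calc inv (frobeniusTensorToHom e he1 he2 X (mkT R M X S m y))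
          = ∑ j, mkT R M X S (γ j m • x j) y := by simp [inv, hψ, NCT.mkT_smul_right]
        _ = mkT R M X S m y := by rw [← NCT.mkT_sum_left, hx]
    | add a b ha hb =>
      simp only [inv, map_add, LinearMap.add_apply, NCT.mkT_add_right,
        Finset.sum_add_distrib] at ha hb ⊢
      rw [ha, hb]
  · ext f
    have hf : ∑ j, e f (x j) • ψ j = f := e.injective <| LinearMap.ext fun m => by
      conv_rhs => rw [← hx m]
      simp [map_sum, map_smul_apply_of_comp_ract e he1, hψ, MulOpposite.smul_eq_mul_unop]
    calc frobeniusTensorToHom e he1 he2 X (inv g) f = ∑ j, e f (x j) • g (ψ j) := by simp [inv]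
      _ = g (∑ j, e f (x j) • ψ j) := by simp
      _ = g f := by rw [hf]

noncomputable def frobeniusTensorIsoHomFunctor [Module.Finite Rᵐᵒᵖ M] [Module.Projective Rᵐᵒᵖ M] :
    tensorFunctor S R M ≅ homFunctor R S (M →ₗ[S] S) :=
  NatIso.ofComponents
    (fun X => (LinearEquiv.ofBijective _ (frobeniusTensorToHom_bijective e he1 he2 X)).toModuleIso)
    fun g => ModuleCat.hom_ext (LinearMap.ext (frobeniusTensorToHom_naturality e he1 he2 g.hom))

noncomputable def frobeniusAdjunction [Module.Finite Rᵐᵒᵖ M] [Module.Projective Rᵐᵒᵖ M] :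
    tensorFunctor R S (M →ₗ[S] S) ⊣ tensorFunctor S R M :=
  (tensorHomAdjunction R S (M →ₗ[S] S)).ofNatIsoRight (frobeniusTensorIsoHomFunctor e he1 he2).symm

end Frobenius


theorem IsFrobeniusBimodule.nonempty_biadjunction {S R M : Type u} [Ring S] [Ring R]
    [AddCommGroup M] [Module S M] [Module Rᵐᵒᵖ M] [SMulCommClass S Rᵐᵒᵖ M]
    [SMulCommClass Rᵐᵒᵖ S M] (hM : IsFrobeniusBimodule S R M) :
    Nonempty (tensorFunctor S R M ⊣ tensorFunctor R S (M →ₗ[S] S)) ∧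
      Nonempty (tensorFunctor R S (M →ₗ[S] S) ⊣ tensorFunctor S R M) := by
  obtain ⟨_, _, _, _, e, he1, he2⟩ := hM
  exact ⟨⟨tensorDualAdjunction S R M⟩, ⟨frobeniusAdjunction e he1 he2⟩⟩

theorem stmt4 (S R M : Type u) [Ring S] [Ring R] [AddCommGroup M]
    [Module S M] [Module Rᵐᵒᵖ M] [SMulCommClass S Rᵐᵒᵖ M] [SMulCommClass Rᵐᵒᵖ S M]
    (hM : IsFrobeniusBimodule S R M)
    (X : Type u) [AddCommGroup X] [Module R X]
    (Y : Type u) [AddCommGroup Y] [Module S Y] :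
    letI : HasDerivedCategory.{u+1} (ModuleCat.{u} R) :=
      MorphismProperty.HasLocalization.standard _
    letI : HasDerivedCategory.{u+1} (ModuleCat.{u} S) :=
      MorphismProperty.HasLocalization.standard _
    haveI : HasExt.{u+1} (ModuleCat.{u} R) := hasExt_of_hasDerivedCategory _
    haveI : HasExt.{u+1} (ModuleCat.{u} S) := hasExt_of_hasDerivedCategory _
    ∀ i : ℕ,
      Nonempty
        (Abelian.Ext.{u+1} (ModuleCat.of S (NCT R M X S)) (ModuleCat.of S Y) i ≃+
          Abelian.Ext.{u+1} (ModuleCat.of R X) (ModuleCat.of R (NCT S (M →ₗ[S] S) Y R)) i) ∧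
      Nonempty
        (Abelian.Ext.{u+1} (ModuleCat.of R (NCT S (M →ₗ[S] S) Y R)) (ModuleCat.of R X) i ≃+
          Abelian.Ext.{u+1} (ModuleCat.of S Y) (ModuleCat.of S (NCT R M X S)) i) := by
  obtain ⟨⟨adj₁⟩, ⟨adj₂⟩⟩ := hM.nonempty_biadjunction
  have := adj₁.isLeftAdjoint
  have := adj₁.isRightAdjoint
  have := adj₂.isLeftAdjoint
  have := adj₂.isRightAdjoint
  -- the statement's `HasExt.{u+1}` instances are not visible to instance search
  have := HasExt.standard (ModuleCat.{u} R)
  have := HasExt.standard (ModuleCat.{u} S)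
  exact fun i => ⟨⟨adj₁.extAddEquiv (ModuleCat.of R X) (ModuleCat.of S Y) i⟩,
    ⟨adj₂.extAddEquiv (ModuleCat.of S Y) (ModuleCat.of R X) i⟩⟩
end

section
/- Let Γ ⊆ Λ be an extension of rings such that the inclusion Γ → Λ is a split monomorphism of left Γ-modules, and suppose that Λ is projective as a left Γ-module and as a right Γ-module. Then domdim(Γ) ≥ domdim(Λ). -/
/-!
Statement 10: Let `Γ ⊆ Λ` be a left-split extension of rings such that `Λ` is projective
as a left and as a right `Γ`-module.  Then `domdim(Γ) ≥ domdim(Λ)`.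
-/

universe u
open MulOpposite
/-- `domdimGE R n M` holds iff there is an exact sequence
`0 → M → I^0 → ⋯ → I^(n-1)` of left `R`-modules in which every `I^j` is both
projective and injective; i.e. the dominant dimension of `M` is at least `n`. -/
def domdimGE (R : Type u) [Ring R] :
    ℕ → (M : Type u) → [AddCommGroup M] → [Module R M] → Prop
  | 0, _, _, _ => True
  | (n+1), M, iM, mM =>
      letI := iM; letI := mM
      ∃ (I : Type u) (_ : AddCommGroup I) (_ : Module R I),
        Module.Projective R I ∧ Module.Injective R I ∧
        ∃ f : M →ₗ[R] I, Function.Injective f ∧ domdimGE R n (I ⧸ LinearMap.range f)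
section SubringExtension

variable {Λ : Type u} [Ring Λ] (Γ : Subring Λ)

/-- `Λ` as a right `Γ`-module, i.e. as a left module over `Γᵐᵒᵖ`, for a subring `Γ ⊆ Λ`. -/
instance subringOpModule : Module (↥Γ)ᵐᵒᵖ Λ where
  smul g x := x * (g.unop : Λ)
  one_smul x := mul_one x
  mul_smul g g' x := (mul_assoc x _ _).symm
  smul_zero g := zero_mul _
  smul_add g x y := add_mul x y _
  add_smul g g' x := by
    show x * ((unop (g + g') : ↥Γ) : Λ) = x * ((unop g : ↥Γ) : Λ) + x * ((unop g' : ↥Γ) : Λ)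
    rw [unop_add, Subring.coe_add, mul_add]
  zero_smul x := by
    show x * ((unop (0 : (↥Γ)ᵐᵒᵖ) : ↥Γ) : Λ) = 0
    rw [unop_zero, ZeroMemClass.coe_zero, mul_zero]

/-- The extension `Γ ⊆ Λ` is left-split if the inclusion is a split monomorphism of left
`Γ`-modules. -/
def IsLeftSplitExtension : Prop :=
  ∃ π : Λ →ₗ[↥Γ] ↥Γ, ∀ g : ↥Γ, π (g : Λ) = g

end SubringExtension

/-!
Restriction of scalars along `Γ ⊆ Λ` preserves projective modules because `Λ` is projective
over `Γ` on the left, and injective modules because `Λ` is projective (hence flat) over `Γ` on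
the right. Restricting a coresolution `0 → Λ → I⁰ → ⋯` with projective-injective terms therefore
bounds the dominant dimension of `Λ` as a `Γ`-module from below by `domdim(Λ)`, and the
left-split hypothesis makes `Γ` a direct summand of this `Γ`-module. Dominant dimension does not
drop on direct summands: if `f : N → I` is the first step for `N = M ⊕ K`, then the two ways of
computing the cokernel of `N → I × I`, `x ↦ (f x, f (pr_M x))`, give
`coker f × I ≅ coker (f|M) × coker (f|K)`, and induction applies.
-/

section DominantDimension

variable {R : Type u} [Ring R]

theorem domdimGE_congr : ∀ (n : ℕ) {M N : Type u} [AddCommGroup M] [Module R M]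
    [AddCommGroup N] [Module R N], (M ≃ₗ[R] N) → domdimGE R n M → domdimGE R n N
  | 0, _, _, _, _, _, _, _, _ => trivial
  | n + 1, _, _, _, _, _, _, e, ⟨I, _, _, hp, hi, f, hf, hC⟩ => by
    have hrange : LinearMap.range (f ∘ₗ e.symm.toLinearMap) = LinearMap.range f := by
      rw [LinearMap.range_comp, LinearEquiv.range, Submodule.map_top]
    exact ⟨I, _, _, hp, hi, f ∘ₗ e.symm.toLinearMap, hf.comp e.symm.injective,
      domdimGE_congr n (Submodule.quotEquivOfEq _ _ hrange.symm) hC⟩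

theorem Module.injective_of_subsingleton (M : Type u) [AddCommGroup M] [Module R M]
    [Subsingleton M] : Module.Injective R M :=
  ⟨fun _ _ _ _ _ _ _ _ _ => ⟨0, fun _ => Subsingleton.elim _ _⟩⟩

theorem domdimGE_of_projective_of_injective : ∀ (n : ℕ) (P : Type u) [AddCommGroup P]
    [Module R P], Module.Projective R P → Module.Injective R P → domdimGE R n P
  | 0, _, _, _, _, _ => trivial
  | n + 1, P, _, _, hp, hi => by
    have : Subsingleton (P ⧸ LinearMap.range (LinearMap.id : P →ₗ[R] P)) := by
      rw [LinearMap.range_id]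
      infer_instance
    exact ⟨P, _, _, hp, hi, LinearMap.id, Function.injective_id,
      domdimGE_of_projective_of_injective n _ inferInstance (Module.injective_of_subsingleton _)⟩

theorem Module.Injective.prod {M N : Type u} [AddCommGroup M] [Module R M]
    [AddCommGroup N] [Module R N] (hM : Module.Injective R M) (hN : Module.Injective R N) :
    Module.Injective R (M × N) := by
  refine ⟨fun X Y _ _ _ _ f hf g => ?_⟩
  obtain ⟨h₁, hh₁⟩ := hM.out f hf (LinearMap.fst R M N ∘ₗ g)
  obtain ⟨h₂, hh₂⟩ := hN.out f hf (LinearMap.snd R M N ∘ₗ g)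
  exact ⟨h₁.prod h₂, fun x => Prod.ext (hh₁ x) (hh₂ x)⟩

noncomputable def Submodule.quotientProdEquiv {A B : Type u} [AddCommGroup A] [Module R A]
    [AddCommGroup B] [Module R B] (p : Submodule R A) (q : Submodule R B) :
    ((A × B) ⧸ p.prod q) ≃ₗ[R] (A ⧸ p) × (B ⧸ q) :=
  Submodule.quotEquivOfEq _ _ (by rw [LinearMap.ker_prodMap, Submodule.ker_mkQ,
      Submodule.ker_mkQ]) ≪≫ₗ
    (p.mkQ.prodMap q.mkQ).quotKerEquivOfSurjective
      (Prod.map_surjective.2 ⟨p.mkQ_surjective, q.mkQ_surjective⟩)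

theorem domdimGE_prod : ∀ (n : ℕ) {M N : Type u} [AddCommGroup M] [Module R M]
    [AddCommGroup N] [Module R N], domdimGE R n M → domdimGE R n N → domdimGE R n (M × N)
  | 0, _, _, _, _, _, _, _, _ => trivial
  | n + 1, _, _, _, _, _, _, ⟨I, _, _, hpI, hiI, f, hf, hC⟩, ⟨J, _, _, hpJ, hiJ, g, hg, hD⟩ => by
    refine ⟨I × J, _, _, inferInstance, hiI.prod hiJ, f.prodMap g,
      Prod.map_injective.2 ⟨hf, hg⟩, ?_⟩
    have e := Submodule.quotEquivOfEq _ _ (LinearMap.range_prodMap f g) ≪≫ₗ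
      Submodule.quotientProdEquiv (LinearMap.range f) (LinearMap.range g)
    exact domdimGE_congr n e.symm (domdimGE_prod n hC hD)

/-- Extending `b` along `a` to `k : A → B` gives an automorphism `(x, y) ↦ (x, y - k x)` of
`A × B` carrying the range of `(a, b)` onto `range a × 0`. -/
noncomputable def quotientRangeProdEquivOfInjective {N A B : Type u} [AddCommGroup N]
    [Module R N] [AddCommGroup A] [Module R A] [AddCommGroup B] [Module R B]
    {a : N →ₗ[R] A} (ha : Function.Injective a) (b : N →ₗ[R] B) (hB : Module.Injective R B) :
    ((A × B) ⧸ LinearMap.range (a.prod b)) ≃ₗ[R] (A ⧸ LinearMap.range a) × B := by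
  let k := (hB.out a ha b).choose
  have hk : ∀ x, k (a x) = b x := (hB.out a ha b).choose_spec
  let e : (A × B) ≃ₗ[R] (A × B) := (LinearEquiv.refl R A).skewProd (LinearEquiv.refl R B) (-k)
  have he : (e : (A × B) →ₗ[R] (A × B)) ∘ₗ a.prod b = LinearMap.inl R A B ∘ₗ a := by
    ext x
    · rfl
    · simp [e, hk x]
  have hrange : (LinearMap.range (a.prod b)).map (e : (A × B) →ₗ[R] (A × B)) =
      (LinearMap.range a).prod ⊥ := by
    rw [← LinearMap.range_comp, he, LinearMap.range_comp, Submodule.map_inl]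
  exact Submodule.Quotient.equiv _ _ e hrange ≪≫ₗ
    Submodule.quotientProdEquiv (LinearMap.range a) (⊥ : Submodule R B) ≪≫ₗ
    (LinearEquiv.refl R _).prodCongr (Submodule.quotEquivOfEqBot ⊥ rfl)

theorem domdimGE_of_retract : ∀ (n : ℕ) {M N : Type u} [AddCommGroup M] [Module R M]
    [AddCommGroup N] [Module R N] (i : M →ₗ[R] N) (p : N →ₗ[R] M),
    p ∘ₗ i = LinearMap.id → domdimGE R n N → domdimGE R n M
  | 0, _, _, _, _, _, _, _, _, _, _ => trivial
  | n + 1, M, N, _, _, _, _, i, p, hpi, ⟨I, _, _, hp, hi, f, hf, hC⟩ => by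
    have hpi' : ∀ m, p (i m) = m := LinearMap.congr_fun hpi
    let g := f ∘ₗ i
    have hg : Function.Injective g := hf.comp (Function.LeftInverse.injective hpi')
    refine ⟨I, _, _, hp, hi, g, hg, ?_⟩
    let q := LinearMap.id - i ∘ₗ p
    have hrange : LinearMap.range ((g ∘ₗ p).prod (f ∘ₗ q)) =
        (LinearMap.range g).prod (LinearMap.range (f ∘ₗ q)) := by
      refine le_antisymm ((LinearMap.range_prod_le _ _).trans
        (Submodule.prod_mono (LinearMap.range_comp_le_range p g) le_rfl)) ?_
      rintro ⟨_, _⟩ ⟨⟨m, rfl⟩, ⟨x, rfl⟩⟩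
      refine ⟨i m + q x, ?_⟩
      simp [g, q, hpi']
    -- `(u, v) ↦ (v, u - v)` carries the range of `(f, g ∘ p)` onto that of `(g ∘ p, f ∘ q)`.
    let e : (I × I) ≃ₗ[R] (I × I) := (LinearEquiv.prodComm R I I).trans
      ((LinearEquiv.refl R I).skewProd (LinearEquiv.refl R I) (-LinearMap.id))
    have he : (LinearMap.range (f.prod (g ∘ₗ p))).map (e : (I × I) →ₗ[R] (I × I)) =
        (LinearMap.range g).prod (LinearMap.range (f ∘ₗ q)) := by
      rw [← hrange, ← LinearMap.range_comp]
      congr 1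
      ext x <;> simp [e, g, q, sub_eq_add_neg]
    have hCI : domdimGE R n ((I ⧸ LinearMap.range f) × I) :=
      domdimGE_prod n hC (domdimGE_of_projective_of_injective n I hp hi)
    have hsum : domdimGE R n ((I ⧸ LinearMap.range g) × (I ⧸ LinearMap.range (f ∘ₗ q))) :=
      domdimGE_congr n ((quotientRangeProdEquivOfInjective hf (g ∘ₗ p) hi).symm ≪≫ₗ
        Submodule.Quotient.equiv _ _ e he ≪≫ₗ Submodule.quotientProdEquiv _ _) hCI
    exact domdimGE_of_retract n (LinearMap.inl R _ _) (LinearMap.fst R _ _) rfl hsum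

end DominantDimension

theorem Module.Projective.trans {S R M : Type*} [Semiring S] [Semiring R] [AddCommMonoid M]
    [Module R M] [Module S R] [Module S M] [IsScalarTower S R R] [IsScalarTower S R M]
    [Module.Projective S R] [Module.Projective R M] : Module.Projective S M := by
  classical
  obtain ⟨s, hs⟩ := Module.projective_def'.mp ‹Module.Projective R M›
  have : Module.Projective S (M →₀ R) := .of_equiv (finsuppLequivDFinsupp S).symm
  exact .of_split (s.restrictScalars S) ((Finsupp.linearCombination R id).restrictScalars S)
    (LinearMap.ext fun x => LinearMap.congr_fun hs x)

section Restriction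

variable {Λ : Type u} [Ring Λ] (Γ : Subring Λ)

theorem Finsupp.sum_unop_smul_eq_zero {J : Ideal Γ} (c : Λ →ₗ[(↥Γ)ᵐᵒᵖ] (↥Γ)ᵐᵒᵖ) {l : J →₀ Λ}
    (hl : Finsupp.linearCombination Λ (fun j : J => ((j : Γ) : Λ)) l = 0) :
    (l.sum fun j x => (c x).unop • j) = 0 := by
  have hc : ∀ (x : Λ) (j : Γ), (c (x * j)).unop = (c x).unop * j := fun x j => by
    change (c (op j • x)).unop = _
    rw [map_smul]
    rfl
  refine Subtype.ext ?_
  calc ((l.sum fun j x => (c x).unop • j : J) : Γ) = l.sum fun j x => (c x).unop * j := by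
        simp [Finsupp.sum]
    _ = (c (l.sum fun j x => x * j)).unop := by simp [Finsupp.sum, map_sum, hc]
    _ = 0 := by
        simpa [Finsupp.linearCombination_apply] using congrArg (fun x => (c x).unop) hl

theorem Finsupp.linearCombination_eq_zero_of_projective [Module.Projective (↥Γ)ᵐᵒᵖ Λ]
    {I : Type*} [AddCommGroup I] [Module Λ I] {J : Ideal Γ} (φ : J →ₗ[Γ] I) {l : J →₀ Λ}
    (hl : Finsupp.linearCombination Λ (fun j : J => ((j : Γ) : Λ)) l = 0) :
    Finsupp.linearCombination Λ (fun j => φ j) l = 0 := by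
  obtain ⟨s, hs⟩ := Module.projective_def'.mp ‹Module.Projective (↥Γ)ᵐᵒᵖ Λ›
  have hs' : ∀ x : Λ, ∑ a ∈ (s x).support, a * (s x a).unop = x :=
    LinearMap.congr_fun hs
  classical
  let A := l.support.biUnion fun j => (s (l j)).support
  have hA : ∀ j ∈ l.support, ∑ a ∈ A, a * (s (l j) a).unop = l j := fun j hj => by
    refine (Finset.sum_subset (Finset.subset_biUnion_of_mem _ hj) fun a _ ha => ?_).symm.trans
      (hs' (l j))
    simp [Finsupp.notMem_support_iff.mp ha]
  calc Finsupp.linearCombination Λ (fun j => φ j) l = ∑ j ∈ l.support, l j • φ j :=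
        Finsupp.linearCombination_apply _ _
    _ = ∑ j ∈ l.support, ∑ a ∈ A, a • φ ((s (l j) a).unop • j) :=
        Finset.sum_congr rfl fun j hj => by
          conv_lhs => rw [← hA j hj, Finset.sum_smul]
          simp [mul_smul, Subring.smul_def]
    _ = ∑ a ∈ A, a • φ (l.sum fun j x => (s x a).unop • j) := by
        rw [Finset.sum_comm]
        refine Finset.sum_congr rfl fun a _ => ?_
        rw [Finsupp.sum, map_sum, Finset.smul_sum]
    _ = 0 := Finset.sum_eq_zero fun a _ => by
        have := Finsupp.sum_unop_smul_eq_zero Γ (Finsupp.lapply a ∘ₗ s) hl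
        simp only [LinearMap.comp_apply, Finsupp.lapply_apply] at this
        rw [this, map_zero, smul_zero]

/-- Baer's criterion: an ideal `J` of `Γ` generates the left ideal `ΛJ`, presented by
`J →₀ Λ`; the relations of this presentation are killed by `Σ λⱼ jⱼ ↦ Σ λⱼ φ(jⱼ)`, so this
map is well defined on `ΛJ` and extends to `Λ` by injectivity of `I`. -/
theorem Module.Injective.subring [Module.Projective (↥Γ)ᵐᵒᵖ Λ] (I : Type u) [AddCommGroup I]
    [Module Λ I] [Module.Injective Λ I] : Module.Injective Γ I := by
  refine Module.Baer.injective fun J φ => ?_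
  let ι := Finsupp.linearCombination Λ (fun j : J => ((j : Γ) : Λ))
  have hker : LinearMap.ker ι ≤ LinearMap.ker (Finsupp.linearCombination Λ (fun j => φ j)) :=
    fun l hl => Finsupp.linearCombination_eq_zero_of_projective Γ φ hl
  obtain ⟨Ψ, hΨ⟩ := Module.Injective.extension_property Λ I _ Λ
    ((LinearMap.ker ι).liftQ ι le_rfl)
    (LinearMap.ker_eq_bot.mp (Submodule.ker_liftQ_eq_bot _ _ _ le_rfl))
    ((LinearMap.ker ι).liftQ _ hker)
  refine ⟨LinearMap.toSpanSingleton Γ I (Ψ 1), fun x hx => ?_⟩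
  have := LinearMap.congr_fun hΨ (Submodule.Quotient.mk (Finsupp.single ⟨x, hx⟩ 1))
  simpa [ι, Subring.smul_def, ← map_smul] using this

theorem domdimGE_subring_of_domdimGE [Module.Projective Γ Λ] [Module.Projective (↥Γ)ᵐᵒᵖ Λ] :
    ∀ (n : ℕ) (M : Type u) [AddCommGroup M] [Module Λ M], domdimGE Λ n M → domdimGE Γ n M
  | 0, _, _, _, _ => trivial
  | n + 1, _, _, _, ⟨I, _, _, hp, hi, f, hf, hC⟩ => by
    refine ⟨I, _, _, .trans (R := Λ), .subring Γ I, f.restrictScalars Γ, hf, ?_⟩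
    have e := Submodule.Quotient.restrictScalarsEquiv Γ (LinearMap.range f)
    exact domdimGE_congr n e.symm (domdimGE_subring_of_domdimGE n _ hC)

end Restriction

theorem stmt10 (Λ : Type u) [Ring Λ] (Γ : Subring Λ)
    (hsplit : IsLeftSplitExtension Γ)
    (hleftproj : Module.Projective ↥Γ Λ)
    (hrightproj : Module.Projective (↥Γ)ᵐᵒᵖ Λ) :
    ∀ n : ℕ, domdimGE Λ n Λ → domdimGE ↥Γ n ↥Γ := by
  intro n h
  obtain ⟨π, hπ⟩ := hsplit
  refine domdimGE_of_retract n (LinearMap.toSpanSingleton Γ Λ 1) π ?_ 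
    (domdimGE_subring_of_domdimGE Γ n Λ h)
  ext
  simpa using hπ 1
end
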